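/- Let σ > 0, r ∈ ℝ, ε ≥ 0, and let N ≥ 1 be a natural number such that Σ_{k=N}^∞ (r/σ)^{2k} / k! ≤ ε. Let ψ̃_r ∈ ℓ²(ℕ, ℝ) denote the normalized truncation of the coherent state, i.e. ψ̃_r(k) = ((r/σ)^k / √(k!)) / √S for k < N and ψ̃_r(k) = 0 for k ≥ N, where S = Σ_{k=0}^{N−1} (r/σ)^{2k}/k!. Then ‖ψ_r − ψ̃_r‖² ≤ 2 · e^{−r²/σ²} · ε, where ‖·‖ is the ℓ² norm. -/
import Mathlib


open Real Finset

/-- The coherent state of a real number `r` (with width `σ`): the sequence in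
`ℓ²(ℕ, ℝ)` given by `ψ_r(k) = e^{−r²/(2σ²)}·(r/σ)^k/√(k!)`; it has `ℓ²` norm 1. -/
noncomputable def coherent (σ r : ℝ) : ℕ → ℝ := fun k =>
  Real.exp (-(r ^ 2) / (2 * σ ^ 2)) * (r / σ) ^ k / Real.sqrt (Nat.factorial k)

/-- If the tail satisfies `Σ_{k=N}^∞ (r/σ)^{2k}/k! ≤ ε`, then the normalized truncation
`ψ̃_r` of the coherent state — with `ψ̃_r(k) = ((r/σ)^k/√(k!))/√S` for `k < N` and `0`
for `k ≥ N`, where `S = Σ_{k=0}^{N−1} (r/σ)^{2k}/k!` — satisfies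
`‖ψ_r − ψ̃_r‖² ≤ 2·e^{−r²/σ²}·ε` in the `ℓ²` norm. -/
theorem truncation_error (σ r ε : ℝ) (hσ : 0 < σ) (hε : 0 ≤ ε) (N : ℕ) (hN : 1 ≤ N)
    (htail : ∑' k : ℕ, (r / σ) ^ (2 * (N + k)) / Nat.factorial (N + k) ≤ ε) :
    ∑' k : ℕ,
      (coherent σ r k -
        if k < N then
          ((r / σ) ^ k / Real.sqrt (Nat.factorial k)) /
            Real.sqrt (∑ i ∈ Finset.range N, (r / σ) ^ (2 * i) / Nat.factorial i)
        else 0) ^ 2 ≤ 2 * Real.exp (-(r ^ 2) / σ ^ 2) * ε := by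
  set x := r / σ with hx
  set c := Real.exp (-(r ^ 2) / (2 * σ ^ 2)) with hcdef
  set S := ∑ i ∈ Finset.range N, x ^ (2 * i) / (Nat.factorial i : ℝ) with hSdef
  set t : ℕ → ℝ := fun k => x ^ (2 * k) / (Nat.factorial k : ℝ) with htdef
  have hc0 : 0 < c := Real.exp_pos _
  have htnn : ∀ k, 0 ≤ t k := by
    intro k
    simp only [htdef, pow_mul]
    positivity
  have hsum : Summable t := by
    have := Real.summable_pow_div_factorial (x ^ 2)
    simpa [htdef, pow_mul] using this
  have hE : ∑' k, t k = Real.exp (x ^ 2) := by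
    have h1 : Real.exp (x ^ 2) = ∑' n : ℕ, (x ^ 2) ^ n / (n.factorial : ℝ) := by
      rw [Real.exp_eq_exp_ℝ, NormedSpace.exp_eq_tsum_div]
    rw [h1]
    simp [htdef, pow_mul]
  set T := ∑' k : ℕ, t (k + N) with hTdef
  have hTε : T ≤ ε := by
    have : T = ∑' k : ℕ, (r / σ) ^ (2 * (N + k)) / Nat.factorial (N + k) := by
      rw [hTdef]
      exact tsum_congr fun k => by rw [add_comm k N]
    rw [this]; exact htail
  have hT0 : 0 ≤ T := tsum_nonneg fun k => htnn _
  have hsplit : S + T = Real.exp (x ^ 2) := by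
    rw [← hE, ← Summable.sum_add_tsum_nat_add N hsum]
  have hS1 : (1 : ℝ) ≤ S := by
    have h0 : (1 : ℝ) = t 0 := by simp [htdef]
    rw [hSdef, h0]
    exact Finset.single_le_sum (fun i _ => htnn i) (Finset.mem_range.mpr hN)
  have hS0 : (0 : ℝ) < S := lt_of_lt_of_le one_pos hS1
  set s := Real.sqrt S with hsdef
  have hs0 : 0 < s := Real.sqrt_pos.mpr hS0
  have hs2 : s ^ 2 = S := Real.sq_sqrt hS0.le
  have hc2 : c ^ 2 = Real.exp (-(r ^ 2) / σ ^ 2) := by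
    rw [hcdef, pow_two, ← Real.exp_add]
    congr 1
    field_simp
    ring
  have hx2 : x ^ 2 = r ^ 2 / σ ^ 2 := by rw [hx, div_pow]
  have hcE : c ^ 2 * Real.exp (x ^ 2) = 1 := by
    rw [hc2, hx2, ← Real.exp_add, neg_div]
    simp
  have hterm : ∀ k,
      (coherent σ r k -
        if k < N then (x ^ k / Real.sqrt (Nat.factorial k)) / s else 0) ^ 2
      = (if k < N then (c - 1 / s) ^ 2 else c ^ 2) * t k := by
    intro k
    have hfac : (0 : ℝ) < Real.sqrt (Nat.factorial k) := by
      apply Real.sqrt_pos.mpr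
      exact_mod_cast Nat.factorial_pos k
    have hfac2 : Real.sqrt (Nat.factorial k) ^ 2 = (Nat.factorial k : ℝ) := by
      apply Real.sq_sqrt; positivity
    have hxk : x ^ (2 * k) = (x ^ k) ^ 2 := by rw [mul_comm, pow_mul]
    by_cases hk : k < N
    · have h1 : coherent σ r k - (x ^ k / Real.sqrt (Nat.factorial k)) / s
          = (c - 1 / s) * (x ^ k / Real.sqrt (Nat.factorial k)) := by
        simp only [coherent, ← hx, ← hcdef]
        field_simp
      rw [if_pos hk, if_pos hk, h1, mul_pow, div_pow, hfac2]; simp [htdef, hxk]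
    · have h1 : coherent σ r k - 0 = c * (x ^ k / Real.sqrt (Nat.factorial k)) := by
        simp only [coherent, ← hx, ← hcdef, sub_zero, mul_div_assoc]
      rw [if_neg hk, if_neg hk, h1, mul_pow, div_pow, hfac2]; simp [htdef, hxk]
  have hgoal : ∑' k : ℕ,
      (coherent σ r k -
        if k < N then (x ^ k / Real.sqrt (Nat.factorial k)) / s else 0) ^ 2
      = (c - 1 / s) ^ 2 * S + c ^ 2 * T := by
    have hsumf : Summable (fun k => (if k < N then (c - 1 / s) ^ 2 else c ^ 2) * t k) := by
      apply Summable.of_nonneg_of_le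
      · intro k
        apply mul_nonneg _ (htnn k)
        split <;> positivity
      · intro k
        have : (if k < N then (c - 1 / s) ^ 2 else c ^ 2) ≤ max ((c - 1/s)^2) (c^2) := by
          split
          · exact le_max_left _ _
          · exact le_max_right _ _
        exact mul_le_mul_of_nonneg_right this (htnn k)
      · exact hsum.mul_left _
    calc ∑' k : ℕ,
        (coherent σ r k -
          if k < N then (x ^ k / Real.sqrt (Nat.factorial k)) / s else 0) ^ 2
        = ∑' k : ℕ, (if k < N then (c - 1 / s) ^ 2 else c ^ 2) * t k :=
          tsum_congr hterm
      _ = (∑ k ∈ Finset.range N, (if k < N then (c - 1 / s) ^ 2 else c ^ 2) * t k)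
          + ∑' k : ℕ, (if k + N < N then (c - 1 / s) ^ 2 else c ^ 2) * t (k + N) :=
          (Summable.sum_add_tsum_nat_add N hsumf).symm
      _ = (c - 1 / s) ^ 2 * S + c ^ 2 * T := by
          congr 1
          · rw [hSdef, Finset.mul_sum]
            apply Finset.sum_congr rfl
            intro k hk
            rw [if_pos (Finset.mem_range.mp hk)]
          · have h2 : ∀ k : ℕ, ¬ (k + N < N) := fun k => by omega
            simp only [h2, if_false, hTdef]
            rw [tsum_mul_left]
  rw [hgoal, ← hc2]
  have key : (c - 1 / s) ^ 2 * S = (c * s - 1) ^ 2 := by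
    rw [← hs2, ← mul_pow]
    congr 1
    field_simp
  rw [key]
  have hcs : c ^ 2 * S + c ^ 2 * T = 1 := by
    rw [← mul_add, hsplit, hcE]
  have hcs0 : 0 ≤ c * s := by positivity
  have hcs1 : c * s ≤ 1 := by nlinarith [hs2, hT0, hc0.le, mul_pos hc0 hs0]
  nlinarith [mul_nonneg hcs0 (sub_nonneg.mpr hcs1), hs2,
    mul_le_mul_of_nonneg_left hTε (mul_pos hc0 hc0).le]
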